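/- arXiv:2006.13481 — 2 statements merged into one kernel-verified Lean document; each statement's English description precedes it below -/
import Mathlib

section
/- Let M = (M, <, ...) be a definably complete locally o-minimal structure. If M enjoys properties (c) and (d), then M enjoys property (a): the image of every nonempty definable discrete subset of M^n under every coordinate projection is discrete. -/
open FirstOrder Set

/-- A subset of a topological space is discrete: every point of it is isolated in it. -/
def DiscreteIn {α : Type*} [TopologicalSpace α] (S : Set α) : Prop :=
  ∀ x ∈ S, ∃ U : Set α, IsOpen U ∧ U ∩ S = {x}

/-- A set is constructible if it is a finite boolean combination of open sets. -/
inductive IsConstructibleSet {α : Type*} [TopologicalSpace α] : Set α → Prop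
  | of_isOpen : ∀ s : Set α, IsOpen s → IsConstructibleSet s
  | compl : ∀ s : Set α, IsConstructibleSet s → IsConstructibleSet sᶜ
  | union : ∀ s t : Set α, IsConstructibleSet s → IsConstructibleSet t →
      IsConstructibleSet (s ∪ t)

variable (L : FirstOrder.Language) (M : Type*) [L.Structure M] [Nonempty M] [LinearOrder M]
  [DenselyOrdered M] [NoMinOrder M] [NoMaxOrder M] [TopologicalSpace M] [OrderTopology M]

/-- The language contains `<`, interpreted as the order: the order relation is definable. -/
def OrderDefinable : Prop :=
  (univ : Set M).Definable L {p : Fin 2 → M | p 0 < p 1}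

/-- `M` is locally o-minimal: every definable subset of `M` is, near each point,
a finite union of points and open intervals. -/
def IsLocallyOMinimal : Prop :=
  ∀ X : Set M, (univ : Set M).Definable₁ L X → ∀ a : M,
    ∃ b c : M, b < a ∧ a < c ∧
      ∃ (P : Finset M) (I : Finset (M × M)),
        X ∩ Set.Ioo b c = ↑P ∪ ⋃ p ∈ I, Set.Ioo p.1 p.2

/-- `M` is definably complete: every nonempty definable subset of `M` has a supremum and
an infimum in `M ∪ {±∞}`; equivalently it has a least upper bound (resp. greatest lower
bound) in `M` whenever it is bounded above (resp. below). -/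
def IsDefinablyComplete : Prop :=
  ∀ X : Set M, (univ : Set M).Definable₁ L X → X.Nonempty →
    (BddAbove X → ∃ a, IsLUB X a) ∧ (BddBelow X → ∃ a, IsGLB X a)

/-- Property (a): images of nonempty definable discrete sets under coordinate projections
are discrete. -/
def PropertyA : Prop :=
  ∀ (n d : ℕ) (X : Set (Fin n → M)) (σ : Fin d → Fin n),
    Function.Injective σ → (univ : Set M).Definable L X → X.Nonempty →
    DiscreteIn X → DiscreteIn ((fun v => v ∘ σ) '' X)

/-- Property (b). -/
def PropertyB : Prop :=
  ∀ (m : ℕ) (X₁ X₂ : Set (Fin m → M)),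
    (univ : Set M).Definable L X₁ → (univ : Set M).Definable L X₂ →
    (interior (X₁ ∪ X₂)).Nonempty →
    (interior X₁).Nonempty ∨ (interior X₂).Nonempty

/-- A map is definable on a set `A` if its graph over `A` is a definable set. -/
def DefinableMapOn {α β : Type} (A : Set (α → M)) (f : (α → M) → (β → M)) : Prop :=
  (univ : Set M).Definable L
    {p : α ⊕ β → M | (p ∘ Sum.inl) ∈ A ∧ p ∘ Sum.inr = f (p ∘ Sum.inl)}

/-- Property (c). -/
def PropertyC : Prop :=
  ∀ (m n : ℕ) (A : Set (Fin m → M)) (f : (Fin m → M) → (Fin n → M)),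
    (univ : Set M).Definable L A → (interior A).Nonempty →
    DefinableMapOn L M A f →
    ∃ U : Set (Fin m → M), (univ : Set M).Definable L U ∧ IsOpen U ∧ U.Nonempty ∧
      U ⊆ A ∧ ContinuousOn f U

/-- Property (d): definable choice for definable sets with discrete fibers over a
coordinate projection. -/
def PropertyD : Prop :=
  ∀ (n d : ℕ) (X : Set (Fin n → M)) (σ : Fin d → Fin n),
    Function.Injective σ → (univ : Set M).Definable L X →
    (∀ x ∈ (fun v => v ∘ σ) '' X, DiscreteIn (X ∩ (fun v => v ∘ σ) ⁻¹' {x})) →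
    ∃ τ : (Fin d → M) → (Fin n → M),
      DefinableMapOn L M ((fun v => v ∘ σ) '' X) τ ∧
      ∀ x ∈ (fun v => v ∘ σ) '' X, τ x ∈ X ∧ τ x ∘ σ = x

-- The dimension of a definable set: the maximal `d` such that some coordinate projection
-- onto `M^d` has image with nonempty interior; `⊥` for the empty set.
open Classical in
noncomputable def ddim {M : Type*} [TopologicalSpace M] {n : ℕ} (X : Set (Fin n → M)) :
    WithBot ℕ :=
  if X = ∅ then ⊥
  else ↑(sSup {e : ℕ | ∃ σ : Fin e → Fin n, Function.Injective σ ∧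
      (interior ((fun v => v ∘ σ) '' X)).Nonempty})

/-- Strong local monotonicity property. -/
def StrongLocalMonotonicity : Prop :=
  ∀ a b : M, a < b → ∀ f : M → M,
    (univ : Set M).Definable L {p : Fin 2 → M | p 0 ∈ Set.Ioo a b ∧ p 1 = f (p 0)} →
    ∃ Xd Xc Xp Xm : Set M,
      (univ : Set M).Definable₁ L Xd ∧ (univ : Set M).Definable₁ L Xc ∧
      (univ : Set M).Definable₁ L Xp ∧ (univ : Set M).Definable₁ L Xm ∧
      Set.Ioo a b = Xd ∪ Xc ∪ Xp ∪ Xm ∧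
      Disjoint Xd Xc ∧ Disjoint Xd Xp ∧ Disjoint Xd Xm ∧
      Disjoint Xc Xp ∧ Disjoint Xc Xm ∧ Disjoint Xp Xm ∧
      DiscreteIn Xd ∧ (∀ x ∈ Set.Ioo a b, x ∈ closure Xd → x ∈ Xd) ∧
      IsOpen Xc ∧ (∀ x ∈ Xc, ∃ U : Set M, IsOpen U ∧ x ∈ U ∧ U ⊆ Xc ∧
        ∀ y ∈ U, f y = f x) ∧
      IsOpen Xp ∧ (∀ x ∈ Xp, ∃ U : Set M, IsOpen U ∧ x ∈ U ∧ U ⊆ Xp ∧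
        StrictMonoOn f U ∧ ContinuousOn f U) ∧
      IsOpen Xm ∧ (∀ x ∈ Xm, ∃ U : Set M, IsOpen U ∧ x ∈ U ∧ U ⊆ Xm ∧
        StrictAntiOn f U ∧ ContinuousOn f U)

/-- Type completeness: for every `a ∈ M ∪ {±∞}`, the types `a⁺` and `a⁻` are complete. -/
def TypeComplete : Prop :=
  ∀ Y : Set M, (univ : Set M).Definable₁ L Y →
    (∀ a : M, (∃ b, a < b ∧ Set.Ioo a b ⊆ Y) ∨ (∃ b, a < b ∧ Set.Ioo a b ∩ Y = ∅)) ∧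
    ((∃ b : M, Set.Iio b ⊆ Y) ∨ (∃ b : M, Set.Iio b ∩ Y = ∅)) ∧
    (∀ a : M, (∃ b, b < a ∧ Set.Ioo b a ⊆ Y) ∨ (∃ b, b < a ∧ Set.Ioo b a ∩ Y = ∅)) ∧
    ((∃ b : M, Set.Ioi b ⊆ Y) ∨ (∃ b : M, Set.Ioi b ∩ Y = ∅))

section Aux

theorem discreteIn_mono {α : Type*} [TopologicalSpace α] {S T : Set α} (hST : S ⊆ T)
    (hT : DiscreteIn T) : DiscreteIn S := by
  intro x hx
  obtain ⟨U, hU, hUT⟩ := hT x (hST hx)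
  refine ⟨U, hU, ?_⟩
  apply Set.Subset.antisymm
  · intro y hy
    exact hUT ▸ Set.mem_inter hy.1 (hST hy.2)
  · intro y hy
    rcases Set.mem_singleton_iff.1 hy with rfl
    exact ⟨((Set.ext_iff.1 hUT _).2 rfl).1, hx⟩

theorem key_coord (hlo : IsLocallyOMinimal L M) (hc : PropertyC L M) (hd : PropertyD L M)
    {n : ℕ} (X : Set (Fin n → M)) (hX : (univ : Set M).Definable L X) (hXd : DiscreteIn X)
    (i : Fin n) : DiscreteIn ((fun v : Fin n → M => v i) '' X) := by
  classical
  set D : Set M := (fun v : Fin n → M => v i) '' X with hDdef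
  by_contra hcon
  unfold DiscreteIn at hcon
  push_neg at hcon
  obtain ⟨a, haD, hna⟩ := hcon
  set σ₁ : Fin 1 → Fin n := fun _ => i with hσ₁
  have hD'eq : (fun v : Fin n → M => v ∘ σ₁) '' X = {p : Fin 1 → M | p 0 ∈ D} := by
    ext p
    constructor
    · rintro ⟨v, hv, rfl⟩
      exact ⟨v, hv, rfl⟩
    · rintro ⟨v, hv, hvp⟩
      exact ⟨v, hv, funext fun k => by
        rw [Subsingleton.elim k 0]; exact hvp⟩
  have hD'def : (univ : Set M).Definable L ((fun v : Fin n → M => v ∘ σ₁) '' X) :=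
    hX.image_comp σ₁
  have hDdef₁ : (univ : Set M).Definable₁ L D := by
    unfold Set.Definable₁
    rw [← hD'eq]
    exact hD'def
  obtain ⟨b, c, hba, hac, P, I, heq⟩ := hlo D hDdef₁ a
  -- D contains an open interval
  have hint : ∃ s t : M, s < t ∧ Set.Ioo s t ⊆ D := by
    by_contra hno
    push_neg at hno
    have hPeq : D ∩ Set.Ioo b c = ↑P := by
      rw [heq]
      have : ⋃ p ∈ I, Set.Ioo p.1 p.2 = (∅ : Set M) := by
        simp only [Set.eq_empty_iff_forall_notMem, Set.mem_iUnion]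
        rintro x ⟨p, hp, hx⟩
        rcases lt_or_ge p.1 p.2 with hlt | hle
        · refine hno p.1 p.2 hlt (fun y hy => ?_)
          have hy' : y ∈ D ∩ Set.Ioo b c := by
            rw [heq]
            exact (Set.mem_union _ _ _).2 (Or.inr (Set.mem_iUnion₂.2 ⟨p, hp, hy⟩))
          exact hy'.1
        · exact absurd (hx.1.trans hx.2) (not_lt.2 hle)
      rw [this, Set.union_empty]
    have haP : a ∈ P := by
      have : a ∈ D ∩ Set.Ioo b c := ⟨haD, hba, hac⟩
      rw [hPeq] at this
      exact this
    set Pl : Finset M := (P.erase a).filter (· < a) with hPl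
    set Pr : Finset M := (P.erase a).filter (a < ·) with hPr
    set b' : M := (insert b Pl).max' (Finset.insert_nonempty _ _) with hb'
    set c' : M := (insert c Pr).min' (Finset.insert_nonempty _ _) with hc'
    have hb'a : b' < a := by
      rw [hb', Finset.max'_lt_iff]
      intro x hx
      rcases Finset.mem_insert.1 hx with rfl | hx
      · exact hba
      · exact (Finset.mem_filter.1 hx).2
    have hac' : a < c' := by
      rw [hc', Finset.lt_min'_iff]
      intro x hx
      rcases Finset.mem_insert.1 hx with rfl | hx
      · exact hac
      · exact (Finset.mem_filter.1 hx).2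
    have hbb' : b ≤ b' := Finset.le_max' _ _ (Finset.mem_insert_self _ _)
    have hcc' : c' ≤ c := Finset.min'_le _ _ (Finset.mem_insert_self _ _)
    apply hna (Set.Ioo b' c') isOpen_Ioo
    ext x
    simp only [Set.mem_inter_iff, Set.mem_Ioo, Set.mem_singleton_iff]
    constructor
    · rintro ⟨⟨hbx, hxc⟩, hxD⟩
      have hxP : x ∈ P := by
        have : x ∈ D ∩ Set.Ioo b c := ⟨hxD, hbb'.trans_lt hbx, hxc.trans_le hcc'⟩
        rw [hPeq] at this
        exact this
      by_contra hxa
      rcases lt_or_gt_of_ne hxa with hlt | hgt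
      · have : x ∈ insert b Pl :=
          Finset.mem_insert_of_mem (Finset.mem_filter.2 ⟨Finset.mem_erase.2 ⟨hxa, hxP⟩, hlt⟩)
        exact absurd (Finset.le_max' _ _ this) (not_le.2 hbx)
      · have : x ∈ insert c Pr :=
          Finset.mem_insert_of_mem (Finset.mem_filter.2 ⟨Finset.mem_erase.2 ⟨hxa, hxP⟩, hgt⟩)
        exact absurd (Finset.min'_le _ _ this) (not_le.2 hxc)
    · rintro rfl
      exact ⟨⟨hb'a, hac'⟩, haD⟩
  obtain ⟨s, t, hst, hsub⟩ := hint
  -- property (d): definable section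
  have hσinj : Function.Injective σ₁ := fun x y _ => Subsingleton.elim x y
  obtain ⟨τ, hτdef, hτsec⟩ := hd n 1 X σ₁ hσinj hX
    (fun x _ => discreteIn_mono Set.inter_subset_left hXd)
  -- property (c): continuity on an open set
  have hintD' : (interior ((fun v : Fin n → M => v ∘ σ₁) '' X)).Nonempty := by
    obtain ⟨m, hm1, hm2⟩ := exists_between hst
    have hopen : IsOpen {p : Fin 1 → M | p 0 ∈ Set.Ioo s t} :=
      (continuous_apply (0 : Fin 1)).isOpen_preimage _ isOpen_Ioo
    have hsub' : {p : Fin 1 → M | p 0 ∈ Set.Ioo s t} ⊆ (fun v : Fin n → M => v ∘ σ₁) '' X := by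
      rw [hD'eq]
      intro p hp
      exact hsub hp
    exact ⟨fun _ => m, interior_maximal hsub' hopen ⟨hm1, hm2⟩⟩
  obtain ⟨U, hUdef, hUopen, hUne, hUsub, hUcont⟩ :=
    hc 1 n ((fun v : Fin n → M => v ∘ σ₁) '' X) τ hD'def hintD' hτdef
  obtain ⟨p, hpU⟩ := hUne
  obtain ⟨hτpX, hτpσ⟩ := hτsec p (hUsub hpU)
  obtain ⟨V, hVopen, hVint⟩ := hXd (τ p) hτpX
  have hWopen : IsOpen (U ∩ τ ⁻¹' V) := hUcont.isOpen_inter_preimage hUopen hVopen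
  have hτpV : τ p ∈ V := ((Set.ext_iff.1 hVint (τ p)).2 rfl).1
  have hWsub : U ∩ τ ⁻¹' V = {p} := by
    ext q
    simp only [Set.mem_inter_iff, Set.mem_preimage, Set.mem_singleton_iff]
    constructor
    · rintro ⟨hqU, hqV⟩
      obtain ⟨hτqX, hτqσ⟩ := hτsec q (hUsub hqU)
      have : τ q ∈ V ∩ X := ⟨hqV, hτqX⟩
      rw [hVint, Set.mem_singleton_iff] at this
      rw [← hτqσ, this, hτpσ]
    · rintro rfl
      exact ⟨hpU, hτpV⟩
  -- contradiction: singleton open set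
  have he : Continuous (fun m : M => (fun _ : Fin 1 => m)) :=
    continuous_pi fun _ => continuous_id
  have hO : IsOpen ((fun m : M => (fun _ : Fin 1 => m)) ⁻¹' {p}) :=
    (hWsub ▸ hWopen).preimage he
  have hp0 : (fun _ : Fin 1 => p 0) = p := funext fun k => by rw [Subsingleton.elim k 0]
  have hp0mem : p 0 ∈ (fun m : M => (fun _ : Fin 1 => m)) ⁻¹' {p} := by
    simp only [Set.mem_preimage, Set.mem_singleton_iff]
    exact hp0
  obtain ⟨l, u, hlu, hsubO⟩ := mem_nhds_iff_exists_Ioo_subset.1 (hO.mem_nhds hp0mem)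
  obtain ⟨m', hm'1, hm'2⟩ := exists_between hlu.1
  have hm'O : m' ∈ (fun m : M => (fun _ : Fin 1 => m)) ⁻¹' {p} :=
    hsubO ⟨hm'1, hm'2.trans hlu.2⟩
  have : m' = p 0 := by
    have := (Set.mem_preimage.1 hm'O : (fun _ : Fin 1 => m') = p)
    exact congrFun this 0
  exact absurd this (ne_of_lt hm'2)

end Aux

theorem stmt8 (hlt : OrderDefinable L M) (hlo : IsLocallyOMinimal L M)
    (hdc : IsDefinablyComplete L M) (hc : PropertyC L M) (hd : PropertyD L M) :
    PropertyA L M := by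
  intro n d X σ hσ hXdef hXne hXdisc
  intro w hw
  obtain ⟨v, hvX, rfl⟩ := hw
  have hkey : ∀ j : Fin d, ∃ U : Set M, IsOpen U ∧
      U ∩ ((fun u : Fin n → M => u (σ j)) '' X) = {v (σ j)} := fun j =>
    key_coord L M hlo hc hd X hXdef hXdisc (σ j) (v (σ j)) ⟨v, hvX, rfl⟩
  choose U hUopen hUint using hkey
  refine ⟨Set.pi Set.univ U, isOpen_set_pi Set.finite_univ (fun j _ => hUopen j), ?_⟩
  ext y
  simp only [Set.mem_inter_iff, Set.mem_singleton_iff]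
  constructor
  · rintro ⟨hyU, ⟨u, huX, rfl⟩⟩
    funext j
    have : u (σ j) ∈ U j ∩ ((fun u : Fin n → M => u (σ j)) '' X) :=
      ⟨hyU j (Set.mem_univ j), ⟨u, huX, rfl⟩⟩
    rw [hUint j, Set.mem_singleton_iff] at this
    exact this
  · rintro rfl
    refine ⟨fun j _ => ?_, ⟨v, hvX, rfl⟩⟩
    have : v (σ j) ∈ U j ∩ ((fun u : Fin n → M => u (σ j)) '' X) := by
      rw [hUint j]; rfl
    exact this.1
end

section
/- Let M = (M, <, ...) be a locally o-minimal structure with property (a). A definable subset X of M^n has dimension zero if and only if X is nonempty and discrete; and every definable set of dimension zero is closed. -/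
open FirstOrder Set

variable (L : FirstOrder.Language) (M : Type*) [L.Structure M] [Nonempty M] [LinearOrder M]
  [DenselyOrdered M] [NoMinOrder M] [NoMaxOrder M] [TopologicalSpace M] [OrderTopology M]

section Aux

open Topology Filter

variable {L M}

/-- In a densely ordered linear order with the order topology and no max, singletons are
not open. -/
lemma aux_not_isOpen_singleton (a : M) : ¬ IsOpen ({a} : Set M) := by
  intro h
  have h1 : ({a} : Set M) ∈ 𝓝[>] a :=
    mem_nhdsWithin_of_mem_nhds (h.mem_nhds (mem_singleton a))
  have h2 : Set.Ioi a ∈ 𝓝[>] a := self_mem_nhdsWithin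
  have h3 : ({a} : Set M) ∩ Set.Ioi a ∈ 𝓝[>] a := Filter.inter_mem h1 h2
  have h4 : ({a} : Set M) ∩ Set.Ioi a = ∅ := by
    ext x; simp only [mem_inter_iff, mem_singleton_iff, mem_Ioi, mem_empty_iff_false,
      iff_false, not_and]
    rintro rfl; exact lt_irrefl _
  rw [h4] at h3
  exact (Filter.empty_notMem (𝓝[>] a)) h3

/-- Singletons are not open in `Fin e → M` when `e ≠ 0`. -/
lemma aux_not_isOpen_singleton_pi {e : ℕ} (he : e ≠ 0) (x : Fin e → M) :
    ¬ IsOpen ({x} : Set (Fin e → M)) := by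
  intro h
  have i0 : Fin e := ⟨0, Nat.pos_of_ne_zero he⟩
  have hc : Continuous (fun t : M => Function.update x i0 t) :=
    continuous_const.update i0 continuous_id
  have hopen := h.preimage hc
  have heq : (fun t : M => Function.update x i0 t) ⁻¹' {x} = {x i0} := by
    ext t
    simp only [mem_preimage, mem_singleton_iff, Function.update_eq_self_iff]
  rw [heq] at hopen
  exact aux_not_isOpen_singleton (x i0) hopen

/-- A subset of a closed discrete set is discrete and closed. -/
lemma aux_subset_closed_discrete {α : Type*} [TopologicalSpace α] {D X : Set α}
    (hXD : X ⊆ D) (hD : DiscreteIn D) (hDc : IsClosed D) : DiscreteIn X ∧ IsClosed X := by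
  constructor
  · intro x hx
    obtain ⟨U, hU, hUD⟩ := hD x (hXD hx)
    have hxU : x ∈ U := by
      have : x ∈ U ∩ D := hUD ▸ mem_singleton x
      exact this.1
    refine ⟨U, hU, subset_antisymm ?_ ?_⟩
    · intro y hy
      have : y ∈ U ∩ D := ⟨hy.1, hXD hy.2⟩
      rw [hUD] at this; exact this
    · intro y hy
      rw [mem_singleton_iff] at hy
      subst hy; exact ⟨hxU, hx⟩
  · rw [← isOpen_compl_iff, isOpen_iff_mem_nhds]
    intro d hd
    by_cases hdD : d ∈ D
    · obtain ⟨U, hU, hUD⟩ := hD d hdD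
      have hdU : d ∈ U := by
        have : d ∈ U ∩ D := hUD ▸ mem_singleton d
        exact this.1
      refine Filter.mem_of_superset (hU.mem_nhds hdU) ?_
      intro y hyU hyX
      have : y ∈ U ∩ D := ⟨hyU, hXD hyX⟩
      rw [hUD, mem_singleton_iff] at this
      exact hd (this ▸ hyX)
    · refine Filter.mem_of_superset (hDc.isOpen_compl.mem_nhds hdD) ?_
      intro y hy hyX; exact hy (hXD hyX)

/-- In a locally o-minimal structure, a definable subset of `M` with empty interior is
locally finite. -/
lemma aux_locallyFinite (hlo : IsLocallyOMinimal L M) {Y : Set M}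
    (hdef : (univ : Set M).Definable₁ L Y) (hint : interior Y = ∅) (a : M) :
    ∃ b c : M, b < a ∧ a < c ∧ (Y ∩ Set.Ioo b c).Finite := by
  obtain ⟨b, c, hb, hc, P, I, heq⟩ := hlo Y hdef a
  refine ⟨b, c, hb, hc, ?_⟩
  have hsub : Y ∩ Set.Ioo b c ⊆ ↑P := by
    intro y hy
    rw [heq] at hy
    rcases hy with hy | hy
    · exact hy
    · exfalso
      simp only [mem_iUnion] at hy
      obtain ⟨p, hpI, hyp⟩ := hy
      have hio : Set.Ioo p.1 p.2 ⊆ Y := by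
        intro z hz
        have : z ∈ Y ∩ Set.Ioo b c := by
          rw [heq]; right
          simp only [mem_iUnion]; exact ⟨p, hpI, hz⟩
        exact this.1
      have : Set.Ioo p.1 p.2 ⊆ interior Y := isOpen_Ioo.subset_interior_iff.mpr hio
      rw [hint] at this
      exact this hyp
  exact (P.finite_toSet).subset hsub

/-- In a locally o-minimal structure, a definable subset of `M` with empty interior is
discrete and closed. -/
lemma aux_discrete_closed_M (hlo : IsLocallyOMinimal L M) {Y : Set M}
    (hdef : (univ : Set M).Definable₁ L Y) (hint : interior Y = ∅) :
    DiscreteIn Y ∧ IsClosed Y := by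
  constructor
  · intro a haY
    obtain ⟨b, c, hb, hc, hfin⟩ := aux_locallyFinite hlo hdef hint a
    refine ⟨Set.Ioo b c \ ((Y ∩ Set.Ioo b c) \ {a}), isOpen_Ioo.sdiff
      ((hfin.subset (diff_subset)).isClosed), ?_⟩
    apply subset_antisymm
    · rintro y ⟨⟨hy1, hy2⟩, hyY⟩
      by_contra hne
      exact hy2 ⟨⟨hyY, hy1⟩, hne⟩
    · intro y hy
      rw [mem_singleton_iff] at hy; subst hy
      exact ⟨⟨⟨hb, hc⟩, fun h => h.2 rfl⟩, haY⟩
  · rw [← isOpen_compl_iff, isOpen_iff_mem_nhds]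
    intro a ha
    obtain ⟨b, c, hb, hc, hfin⟩ := aux_locallyFinite hlo hdef hint a
    have hopen : IsOpen (Set.Ioo b c \ (Y ∩ Set.Ioo b c)) :=
      isOpen_Ioo.sdiff hfin.isClosed
    have hmem : a ∈ Set.Ioo b c \ (Y ∩ Set.Ioo b c) := ⟨⟨hb, hc⟩, fun h => ha h.1⟩
    refine Filter.mem_of_superset (hopen.mem_nhds hmem) ?_
    rintro y ⟨hy1, hy2⟩ hyY
    exact hy2 ⟨hyY, hy1⟩

/-- A product of discrete closed subsets of `M` is discrete and closed in `Fin n → M`. -/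
lemma aux_pi_discrete_closed {n : ℕ} {Y : Fin n → Set M}
    (hd : ∀ i, DiscreteIn (Y i)) (hc : ∀ i, IsClosed (Y i)) :
    DiscreteIn {v : Fin n → M | ∀ i, v i ∈ Y i} ∧
      IsClosed {v : Fin n → M | ∀ i, v i ∈ Y i} := by
  constructor
  · intro v hv
    choose U hUopen hUeq using fun i => hd i (v i) (hv i)
    refine ⟨⋂ i, (fun w : Fin n → M => w i) ⁻¹' U i,
      isOpen_iInter_of_finite fun i => (hUopen i).preimage (continuous_apply i), ?_⟩
    apply subset_antisymm
    · rintro w ⟨hw1, hw2⟩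
      simp only [mem_iInter, mem_preimage] at hw1
      have : ∀ i, w i = v i := by
        intro i
        have : w i ∈ U i ∩ Y i := ⟨hw1 i, hw2 i⟩
        rw [hUeq i, mem_singleton_iff] at this; exact this
      exact funext this
    · intro w hw
      rw [mem_singleton_iff] at hw; rw [hw]
      refine ⟨?_, hv⟩
      simp only [mem_iInter, mem_preimage]
      intro i
      have : v i ∈ U i ∩ Y i := (hUeq i) ▸ mem_singleton (v i)
      exact this.1
  · have : {v : Fin n → M | ∀ i, v i ∈ Y i} = ⋂ i, (fun w : Fin n → M => w i) ⁻¹' Y i := by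
      ext v; simp
    rw [this]
    exact isClosed_iInter fun i => (hc i).preimage (continuous_apply i)

/-- The projection of a definable set to one coordinate is `Definable₁`. -/
lemma aux_proj_definable {n : ℕ} {X : Set (Fin n → M)}
    (hX : (univ : Set M).Definable L X) (i : Fin n) :
    (univ : Set M).Definable₁ L ((fun v : Fin n → M => v i) '' X) := by
  have h := hX.image_comp (fun _ : Fin 1 => i)
  have heq : ((fun g : Fin n → M => g ∘ fun _ : Fin 1 => i) '' X) =
      {x : Fin 1 → M | x 0 ∈ (fun v : Fin n → M => v i) '' X} := by
    ext x
    simp only [mem_image, mem_setOf_eq]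
    constructor
    · rintro ⟨v, hv, rfl⟩; exact ⟨v, hv, rfl⟩
    · rintro ⟨v, hv, hvx⟩
      refine ⟨v, hv, funext fun j => ?_⟩
      have : j = 0 := Subsingleton.elim j 0
      subst this; exact hvx
  rw [heq] at h
  exact h

/-- Transfer of interiors between `Fin 1 → M` and `M`. -/
lemma aux_interior_transfer {Y : Set M}
    (h : interior {x : Fin 1 → M | x 0 ∈ Y} = ∅) : interior Y = ∅ := by
  by_contra hne
  obtain ⟨a, ha⟩ := nonempty_iff_ne_empty.mpr hne
  set e : (Fin 1 → M) ≃ₜ M := Homeomorph.funUnique (Fin 1) M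
  have hset : {x : Fin 1 → M | x 0 ∈ Y} = e ⁻¹' Y := by
    ext x
    rfl
  have : e.symm a ∈ interior {x : Fin 1 → M | x 0 ∈ Y} := by
    rw [hset, ← e.preimage_interior]
    simpa using ha
  rw [h] at this
  exact this

/-- The key set is bounded above by `n`. -/
lemma aux_bddAbove {n : ℕ} (X : Set (Fin n → M)) :
    BddAbove {e : ℕ | ∃ σ : Fin e → Fin n, Function.Injective σ ∧
      (interior ((fun v : Fin n → M => v ∘ σ) '' X)).Nonempty} := by
  refine ⟨n, ?_⟩
  rintro e ⟨σ, hσ, -⟩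
  have := Fintype.card_le_of_injective σ hσ
  simpa using this

end Aux

lemma aux_key (L : FirstOrder.Language) (M : Type*) [L.Structure M] [Nonempty M]
    [LinearOrder M] [DenselyOrdered M] [NoMinOrder M] [NoMaxOrder M] [TopologicalSpace M]
    [OrderTopology M] (hlo : IsLocallyOMinimal L M) (n : ℕ) (X : Set (Fin n → M))
    (hX : (univ : Set M).Definable L X)
    (hproj : ∀ i : Fin n, interior ((fun v : Fin n → M => v i) '' X) = (∅ : Set M)) :
    DiscreteIn X ∧ IsClosed X := by
  set Y : Fin n → Set M := fun i => (fun v : Fin n → M => v i) '' X with hY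
  have hdc : ∀ i, DiscreteIn (Y i) ∧ IsClosed (Y i) := fun i =>
    aux_discrete_closed_M hlo (aux_proj_definable hX i) (hproj i)
  have hXD : X ⊆ {v : Fin n → M | ∀ i, v i ∈ Y i} := fun v hv i => ⟨v, hv, rfl⟩
  obtain ⟨hDd, hDc⟩ := aux_pi_discrete_closed (fun i => (hdc i).1) (fun i => (hdc i).2)
  exact aux_subset_closed_discrete hXD hDd hDc

theorem stmt10 (hlt : OrderDefinable L M) (hlo : IsLocallyOMinimal L M)
    (ha : PropertyA L M) (n : ℕ) (X : Set (Fin n → M))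
    (hX : (univ : Set M).Definable L X) :
    (ddim X = (0 : WithBot ℕ) ↔ X.Nonempty ∧ DiscreteIn X) ∧
      (ddim X = (0 : WithBot ℕ) → IsClosed X) := by
  set S : Set ℕ := {e : ℕ | ∃ σ : Fin e → Fin n, Function.Injective σ ∧
      (interior ((fun v : Fin n → M => v ∘ σ) '' X)).Nonempty} with hS
  -- From `ddim X = 0` we get discreteness and closedness.
  have key : ddim X = (0 : WithBot ℕ) → X.Nonempty ∧ DiscreteIn X ∧ IsClosed X := by
    intro h0
    have hne : X ≠ ∅ := by
      intro h
      rw [ddim, if_pos h] at h0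
      exact absurd h0 (by simp)
    have hXne : X.Nonempty := nonempty_iff_ne_empty.mpr hne
    rw [ddim, if_neg hne] at h0
    have hsup : sSup S = 0 := by exact_mod_cast h0
    have hproj : ∀ i : Fin n, interior ((fun v : Fin n → M => v i) '' X) = (∅ : Set M) := by
      intro i
      apply aux_interior_transfer (M := M)
      by_contra hcon
      obtain ⟨x, hx⟩ := nonempty_iff_ne_empty.mpr hcon
      have h1 : (1 : ℕ) ∈ S := by
        refine ⟨fun _ => i, Function.injective_of_subsingleton _, ?_⟩
        have heq : ((fun v : Fin n → M => v ∘ fun _ : Fin 1 => i) '' X) =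
            {x : Fin 1 → M | x 0 ∈ (fun v : Fin n → M => v i) '' X} := by
          ext x
          simp only [mem_image, mem_setOf_eq]
          constructor
          · rintro ⟨v, hv, rfl⟩; exact ⟨v, hv, rfl⟩
          · rintro ⟨v, hv, hvx⟩
            refine ⟨v, hv, funext fun j => ?_⟩
            have : j = 0 := Subsingleton.elim j 0
            subst this; exact hvx
        rw [heq]
        exact ⟨x, hx⟩
      have h2 := le_csSup (aux_bddAbove X) h1
      rw [← hS, hsup] at h2
      omega
    obtain ⟨hd, hc⟩ := aux_key L M hlo n X hX hproj
    exact ⟨hXne, hd, hc⟩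
  refine ⟨⟨fun h0 => ⟨(key h0).1, (key h0).2.1⟩, ?_⟩, fun h0 => (key h0).2.2⟩
  rintro ⟨hXne, hXd⟩
  have hne : X ≠ ∅ := nonempty_iff_ne_empty.mp hXne
  rw [ddim, if_neg hne]
  have hSeq : S = {0} := by
    apply subset_antisymm
    · rintro e ⟨σ, hσ, hint⟩
      rw [mem_singleton_iff]
      by_contra hne0
      -- the image is discrete by Property (a)
      have hdisc : DiscreteIn ((fun v : Fin n → M => v ∘ σ) '' X) :=
        ha n e X σ hσ hX hXne hXd
      obtain ⟨x, hx⟩ := hint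
      have hxim : x ∈ (fun v : Fin n → M => v ∘ σ) '' X := interior_subset hx
      obtain ⟨V, hVopen, hVeq⟩ := hdisc x hxim
      have hopen : IsOpen (interior ((fun v : Fin n → M => v ∘ σ) '' X) ∩ V) :=
        isOpen_interior.inter hVopen
      have heq : interior ((fun v : Fin n → M => v ∘ σ) '' X) ∩ V = {x} := by
        apply subset_antisymm
        · intro y hy
          have : y ∈ V ∩ (fun v : Fin n → M => v ∘ σ) '' X :=
            ⟨hy.2, interior_subset hy.1⟩
          rw [hVeq] at this; exact this
        · intro y hy
          rw [mem_singleton_iff] at hy; rw [hy]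
          have hxV : x ∈ V := by
            have : x ∈ V ∩ (fun v : Fin n → M => v ∘ σ) '' X := hVeq ▸ mem_singleton x
            exact this.1
          exact ⟨hx, hxV⟩
      rw [heq] at hopen
      exact aux_not_isOpen_singleton_pi hne0 x hopen
    · intro e he
      rw [mem_singleton_iff] at he; subst he
      refine ⟨Fin.elim0, fun a => a.elim0, ?_⟩
      have : ((fun v : Fin n → M => v ∘ Fin.elim0) '' X) = univ := by
        apply eq_univ_of_forall
        intro y
        obtain ⟨v, hv⟩ := hXne
        exact ⟨v, hv, funext fun j => j.elim0⟩
      rw [this, interior_univ]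
      exact ⟨fun j => j.elim0, trivial⟩
  rw [← hS, hSeq]
  simp [csSup_singleton]
end
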